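/- Let T(x) = 1 - 2x² on [-1,1] with invariant density h(x) = 1/(π√(1-x²)). If b(x,y) = h(x)β₀(y) + x h(x) β₁(y) satisfies the functional equation b(x') = ∑_{x ∈ T^{-1}(x')} (1/|T'(x)|)[b(x) + h(x)(1/2)(x² - 1/2) q(y)] for all x', then β₁(y) = -(1/4) q(y), while β₀ is unconstrained. -/
import Mathlib


open Real

noncomputable def h : ℝ → ℝ := fun x => 1 / (π * Real.sqrt (1 - x ^ 2))

noncomputable def Ulam : ℝ → ℝ := fun x => 1 - 2 * x ^ 2

lemma deriv_Ulam (x : ℝ) : deriv Ulam x = -(4 * x) := by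
  have : Ulam = fun x : ℝ => 1 - 2 * x ^ 2 := rfl
  rw [this]
  have h1 : HasDerivAt (fun x : ℝ => 1 - 2 * x ^ 2) (-(4 * x)) x := by
    have := ((hasDerivAt_pow 2 x).const_mul (2 : ℝ)).const_sub 1
    simpa using this.congr_deriv (by ring)
  exact h1.deriv

lemma preimage_half :
    {x : ℝ | x ∈ Set.Icc (-1 : ℝ) 1 ∧ Ulam x = (1/2 : ℝ)} = {(1/2 : ℝ), (-(1/2) : ℝ)} := by
  ext x
  simp only [Set.mem_setOf_eq, Set.mem_Icc, Set.mem_insert_iff, Set.mem_singleton_iff, Ulam]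
  constructor
  · rintro ⟨_, hx⟩
    have : (x - 1/2) * (x + 1/2) = 0 := by nlinarith
    rcases mul_eq_zero.1 this with h | h
    · left; linarith
    · right; linarith
  · rintro (rfl | rfl) <;> norm_num

lemma h_half_ne : h (1/2 : ℝ) ≠ 0 := by
  unfold h
  have hπ : (0:ℝ) < π := Real.pi_pos
  have hs : (0:ℝ) < Real.sqrt (1 - (1/2:ℝ) ^ 2) := by
    apply Real.sqrt_pos.2; norm_num
  positivity

/-- For the Ulam map, the ansatz b(x,y) = h(x)β₀(y) + x h(x)β₁(y) solving the
functional equation forces β₁ = -(1/4) q, with β₀ unconstrained. -/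
theorem Ulam_functional_equation (β₀ β₁ q : ℝ → ℝ)
    (hfe : ∀ x' ∈ Set.Ioo (-1 : ℝ) 1, ∀ y : ℝ,
      h x' * β₀ y + x' * h x' * β₁ y =
        ∑ᶠ x ∈ {x : ℝ | x ∈ Set.Icc (-1 : ℝ) 1 ∧ Ulam x = x'},
          (1 / |deriv Ulam x|) *
            ((h x * β₀ y + x * h x * β₁ y) +
              h x * (1 / 2) * (x ^ 2 - 1 / 2) * q y)) :
    ∀ y : ℝ, β₁ y = -(1 / 4) * q y := by
  intro y
  have hmem : (1/2 : ℝ) ∈ Set.Ioo (-1 : ℝ) 1 := by norm_num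
  have key := hfe (1/2) hmem y
  rw [preimage_half] at key
  rw [finsum_mem_pair (by norm_num : (1/2 : ℝ) ≠ -(1/2))] at key
  have hhs : h (-(1/2) : ℝ) = h (1/2 : ℝ) := by unfold h; norm_num
  rw [hhs, deriv_Ulam, deriv_Ulam] at key
  have habs1 : |(-(4 * (1/2 : ℝ)))| = 2 := by norm_num
  have habs2 : |(-(4 * (-(1/2) : ℝ)))| = 2 := by norm_num
  rw [habs1, habs2] at key
  have hc := h_half_ne
  have : h (1/2 : ℝ) * β₁ y = h (1/2 : ℝ) * (-(1/4) * q y) := by ring_nf; ring_nf at key; linarith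
  have := mul_left_cancel₀ hc this
  linarith
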